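/- arXiv:2405.13375 — 6 statements merged into one kernel-verified Lean document; each statement's English description precedes it below -/
import Mathlib

section
/- Composition of zCDP mechanisms adds their ρ parameters pointwise: if M₁ satisfies ρ⃗₁-zCDP, and for every output y of M₁ the mechanism M₂(·, y) satisfies ρ⃗₂-zCDP, then the adaptively composed mechanism M(x) = (Y₁, Y₂) with Y₁ ∼ M₁(x) and Y₂ ∼ M₂(x, Y₁) satisfies ρ⃗-zCDP with ρ⃗(i) = ρ⃗₁(i) + ρ⃗₂(i) for every coordinate i. -/
open Finset

/-!
The privacy loss of the composed mechanism at `(y₁, y₂)` is the loss of `M₁` at `y₁` plus the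
loss of `M₂ (·, y₁)` at `y₂`, so its exponential moment factors: summing over `y₂` first, the
inner sum is the moment of `M₂ (·, y₁)`, bounded by `exp (τ (τ + 1) ρ₂ i)` uniformly in `y₁`,
and what remains is the moment of `M₁`.
-/

noncomputable def privacyLossMGF {α : Type*} [Fintype α] (p q : α → ℝ) (τ : ℝ) : ℝ :=
  ∑ y, p y * Real.exp (τ * Real.log (p y / q y))

lemma mul_exp_mul_log_div_mul (τ : ℝ) {a a' b b' : ℝ} (ha : a ≠ 0) (ha' : a' ≠ 0)
    (hb : b ≠ 0) (hb' : b' ≠ 0) :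
    a * b * Real.exp (τ * Real.log (a * b / (a' * b'))) =
      a * Real.exp (τ * Real.log (a / a')) * (b * Real.exp (τ * Real.log (b / b'))) := by
  rw [← div_mul_div_comm, Real.log_mul (div_ne_zero ha ha') (div_ne_zero hb hb'), mul_add,
    Real.exp_add]
  ring

section Composition

variable {α β : Type*} [Fintype α] [Fintype β] {p q : α → ℝ} {P Q : α → β → ℝ}

lemma privacyLossMGF_comp (τ : ℝ) (hp : ∀ a, p a ≠ 0) (hq : ∀ a, q a ≠ 0)
    (hP : ∀ a b, P a b ≠ 0) (hQ : ∀ a b, Q a b ≠ 0) :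
    privacyLossMGF (fun y : α × β => p y.1 * P y.1 y.2) (fun y => q y.1 * Q y.1 y.2) τ =
      ∑ a, p a * Real.exp (τ * Real.log (p a / q a)) * privacyLossMGF (P a) (Q a) τ := by
  simp only [privacyLossMGF, Fintype.sum_prod_type, mul_sum]
  refine sum_congr rfl fun a _ => sum_congr rfl fun b _ => ?_
  exact mul_exp_mul_log_div_mul τ (hp a) (hq a) (hP a b) (hQ a b)

lemma privacyLossMGF_comp_le {τ A B : ℝ} (hp : ∀ a, 0 < p a) (hq : ∀ a, 0 < q a)
    (hP : ∀ a b, 0 < P a b) (hQ : ∀ a b, 0 < Q a b) (hA : privacyLossMGF p q τ ≤ A)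
    (hB : ∀ a, privacyLossMGF (P a) (Q a) τ ≤ B) (hB₀ : 0 ≤ B) :
    privacyLossMGF (fun y : α × β => p y.1 * P y.1 y.2) (fun y => q y.1 * Q y.1 y.2) τ ≤
      A * B := by
  rw [privacyLossMGF_comp τ (fun a => (hp a).ne') (fun a => (hq a).ne')
    (fun a b => (hP a b).ne') (fun a b => (hQ a b).ne')]
  calc ∑ a, p a * Real.exp (τ * Real.log (p a / q a)) * privacyLossMGF (P a) (Q a) τ
      ≤ ∑ a, p a * Real.exp (τ * Real.log (p a / q a)) * B :=
        sum_le_sum fun a _ =>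
          mul_le_mul_of_nonneg_left (hB a) (mul_pos (hp a) (Real.exp_pos _)).le
    _ = privacyLossMGF p q τ * B := by rw [privacyLossMGF, sum_mul]
    _ ≤ A * B := mul_le_mul_of_nonneg_right hA hB₀

end Composition

theorem stmt7_general {X Y₁ Y₂ : Type*} [Fintype Y₁] [Fintype Y₂] {n : ℕ}
    (M₁ : (Fin n → X) → Y₁ → ℝ) (M₂ : (Fin n → X) → Y₁ → Y₂ → ℝ)
    (hM₁pos : ∀ x y, 0 < M₁ x y)
    (hM₂pos : ∀ x y₁ y₂, 0 < M₂ x y₁ y₂)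
    (ρ₁ ρ₂ : Fin n → ℝ)
    (hz1 : ∀ (i : Fin n) (x x' : Fin n → X), (∀ j, j ≠ i → x j = x' j) →
      ∀ τ : ℝ, 0 ≤ τ →
        ∑ y, M₁ x y * Real.exp (τ * Real.log (M₁ x y / M₁ x' y))
          ≤ Real.exp (τ * (τ + 1) * ρ₁ i))
    (hz2 : ∀ (y₁ : Y₁) (i : Fin n) (x x' : Fin n → X), (∀ j, j ≠ i → x j = x' j) →
      ∀ τ : ℝ, 0 ≤ τ →
        ∑ y₂, M₂ x y₁ y₂ * Real.exp (τ * Real.log (M₂ x y₁ y₂ / M₂ x' y₁ y₂))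
          ≤ Real.exp (τ * (τ + 1) * ρ₂ i)) :
    ∀ (i : Fin n) (x x' : Fin n → X), (∀ j, j ≠ i → x j = x' j) →
      ∀ τ : ℝ, 0 ≤ τ →
        ∑ y : Y₁ × Y₂, (M₁ x y.1 * M₂ x y.1 y.2) *
            Real.exp (τ * Real.log ((M₁ x y.1 * M₂ x y.1 y.2) / (M₁ x' y.1 * M₂ x' y.1 y.2)))
          ≤ Real.exp (τ * (τ + 1) * (ρ₁ i + ρ₂ i)) := by
  intro i x x' hx τ hτ
  rw [mul_add, Real.exp_add]
  exact privacyLossMGF_comp_le (hM₁pos x) (hM₁pos x') (hM₂pos x) (hM₂pos x')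
    (hz1 i x x' hx τ hτ) (fun y₁ => hz2 y₁ i x x' hx τ hτ) (Real.exp_pos _).le

/-- Adaptive composition of zCDP mechanisms adds their `ρ` parameters pointwise:
if `M₁` satisfies `ρ⃗₁`-zCDP and `M₂ (·, y)` satisfies `ρ⃗₂`-zCDP for every `y`,
then the composed mechanism `x ↦ (Y₁, Y₂)` with `Y₁ ∼ M₁ x`, `Y₂ ∼ M₂ x Y₁`
satisfies `(ρ⃗₁ + ρ⃗₂)`-zCDP (in terms of the moment generating function of the
privacy loss). -/
theorem stmt7 {X Y₁ Y₂ : Type*} [Fintype Y₁] [Fintype Y₂] {n : ℕ}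
    (M₁ : (Fin n → X) → Y₁ → ℝ) (M₂ : (Fin n → X) → Y₁ → Y₂ → ℝ)
    (hM₁pos : ∀ x y, 0 < M₁ x y) (hM₁1 : ∀ x, ∑ y, M₁ x y = 1)
    (hM₂pos : ∀ x y₁ y₂, 0 < M₂ x y₁ y₂) (hM₂1 : ∀ x y₁, ∑ y₂, M₂ x y₁ y₂ = 1)
    (ρ₁ ρ₂ : Fin n → ℝ)
    (hz1 : ∀ (i : Fin n) (x x' : Fin n → X), (∀ j, j ≠ i → x j = x' j) →
      ∀ τ : ℝ, 0 ≤ τ →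
        ∑ y, M₁ x y * Real.exp (τ * Real.log (M₁ x y / M₁ x' y))
          ≤ Real.exp (τ * (τ + 1) * ρ₁ i))
    (hz2 : ∀ (y₁ : Y₁) (i : Fin n) (x x' : Fin n → X), (∀ j, j ≠ i → x j = x' j) →
      ∀ τ : ℝ, 0 ≤ τ →
        ∑ y₂, M₂ x y₁ y₂ * Real.exp (τ * Real.log (M₂ x y₁ y₂ / M₂ x' y₁ y₂))
          ≤ Real.exp (τ * (τ + 1) * ρ₂ i)) :
    ∀ (i : Fin n) (x x' : Fin n → X), (∀ j, j ≠ i → x j = x' j) →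
      ∀ τ : ℝ, 0 ≤ τ →
        ∑ y : Y₁ × Y₂, (M₁ x y.1 * M₂ x y.1 y.2) *
            Real.exp (τ * Real.log ((M₁ x y.1 * M₂ x y.1 y.2) / (M₁ x' y.1 * M₂ x' y.1 y.2)))
          ≤ Real.exp (τ * (τ + 1) * (ρ₁ i + ρ₂ i)) :=
  stmt7_general M₁ M₂ hM₁pos hM₂pos ρ₁ ρ₂ hz1 hz2
end

section
/- Post-processing preserves zCDP: if M₀ : 𝒳ⁿ → Y satisfies ρ⃗-zCDP and f : Y → Z is any function, then M(x) = f(M₀(x)) satisfies ρ⃗-zCDP. In particular, for discrete distributions P, Q on Y and any τ ≥ 0, E_{Z′ ∼ PrivLoss(f(P) ‖ f(Q))}[exp(τZ′)] ≤ E_{Z ∼ PrivLoss(P ‖ Q)}[exp(τZ)]. -/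
open Finset

private lemma jensen_step {Y : Type*} (s : Finset Y) (P Q : Y → ℝ)
    (hP : ∀ y ∈ s, 0 < P y) (hQ : ∀ y ∈ s, 0 < Q y) (τ : ℝ) (hτ : 0 ≤ τ) :
    (∑ y ∈ s, P y) * Real.exp (τ * Real.log ((∑ y ∈ s, P y) / (∑ y ∈ s, Q y)))
      ≤ ∑ y ∈ s, P y * Real.exp (τ * Real.log (P y / Q y)) := by
  rcases s.eq_empty_or_nonempty with rfl | hs
  · simp
  have hA : 0 < ∑ y ∈ s, P y := Finset.sum_pos hP hs
  have hB : 0 < ∑ y ∈ s, Q y := Finset.sum_pos hQ hs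
  set A := ∑ y ∈ s, P y with hAdef
  set B := ∑ y ∈ s, Q y with hBdef
  -- rewrite exp (τ * log t) as t ^ τ
  have hexp : ∀ t : ℝ, 0 < t → Real.exp (τ * Real.log t) = t ^ τ := by
    intro t ht
    rw [Real.rpow_def_of_pos ht, mul_comm]
  rw [hexp _ (div_pos hA hB)]
  have hsum : ∑ y ∈ s, P y * Real.exp (τ * Real.log (P y / Q y))
      = ∑ y ∈ s, P y * (P y / Q y) ^ τ := by
    refine Finset.sum_congr rfl fun y hy => ?_
    rw [hexp _ (div_pos (hP y hy) (hQ y hy))]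
  rw [hsum]
  -- key Jensen step with weights Q y / B and points P y / Q y, exponent τ + 1
  have hjensen := Real.rpow_arith_mean_le_arith_mean_rpow s (fun y => Q y / B)
    (fun y => P y / Q y)
    (fun y hy => le_of_lt (div_pos (hQ y hy) hB))
    (by rw [← Finset.sum_div, div_self hB.ne'])
    (fun y hy => le_of_lt (div_pos (hP y hy) (hQ y hy)))
    (p := τ + 1) (by linarith)
  have hwz : ∑ y ∈ s, Q y / B * (P y / Q y) = A / B := by
    have h1 : ∀ y ∈ s, Q y / B * (P y / Q y) = P y / B := fun y hy => by
      have hq := (hQ y hy).ne'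
      have hb := hB.ne'
      field_simp
    rw [Finset.sum_congr rfl h1, ← Finset.sum_div]
  rw [hwz] at hjensen
  have key : B * ((A / B) ^ (τ + 1)) ≤ B * ∑ y ∈ s, Q y / B * (P y / Q y) ^ (τ + 1) :=
    mul_le_mul_of_nonneg_left hjensen hB.le
  calc A * (A / B) ^ τ = B * ((A / B) ^ (τ + 1)) := by
        rw [Real.rpow_add_one (div_pos hA hB).ne']
        field_simp
    _ ≤ B * ∑ y ∈ s, Q y / B * (P y / Q y) ^ (τ + 1) := key
    _ = ∑ y ∈ s, P y * (P y / Q y) ^ τ := by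
        rw [Finset.mul_sum]
        refine Finset.sum_congr rfl fun y hy => ?_
        rw [Real.rpow_add_one (div_pos (hP y hy) (hQ y hy)).ne']
        have hq := (hQ y hy).ne'
        field_simp

private lemma dpi {Y Z : Type*} [Fintype Y] [Fintype Z] [DecidableEq Z] (f : Y → Z)
    (P Q : Y → ℝ) (hP : ∀ y, 0 < P y) (hQ : ∀ y, 0 < Q y) (τ : ℝ) (hτ : 0 ≤ τ) :
    ∑ z, (∑ y ∈ univ.filter (fun y => f y = z), P y) *
        Real.exp (τ * Real.log ((∑ y ∈ univ.filter (fun y => f y = z), P y) /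
          (∑ y ∈ univ.filter (fun y => f y = z), Q y)))
      ≤ ∑ y, P y * Real.exp (τ * Real.log (P y / Q y)) := by
  rw [← Finset.sum_fiberwise univ f (fun y => P y * Real.exp (τ * Real.log (P y / Q y)))]
  exact Finset.sum_le_sum fun z _ =>
    jensen_step _ P Q (fun y _ => hP y) (fun y _ => hQ y) τ hτ

/-- Post-processing preserves zCDP, and the underlying data-processing inequality
for moment generating functions of privacy losses: for discrete distributions
`P, Q` on `Y`, pushing forward through `f` can only decrease the MGF of the
privacy loss. -/
theorem stmt8 {X Y Z : Type*} [Fintype Y] [Fintype Z] [DecidableEq Z] {n : ℕ}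
    (M₀ : (Fin n → X) → Y → ℝ)
    (hM₀pos : ∀ x y, 0 < M₀ x y) (hM₀1 : ∀ x, ∑ y, M₀ x y = 1)
    (ρ : Fin n → ℝ)
    (hzCDP : ∀ (i : Fin n) (x x' : Fin n → X), (∀ j, j ≠ i → x j = x' j) →
      ∀ τ : ℝ, 0 ≤ τ →
        ∑ y, M₀ x y * Real.exp (τ * Real.log (M₀ x y / M₀ x' y))
          ≤ Real.exp (τ * (τ + 1) * ρ i))
    (f : Y → Z) :
    (∀ (i : Fin n) (x x' : Fin n → X), (∀ j, j ≠ i → x j = x' j) →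
      ∀ τ : ℝ, 0 ≤ τ →
        ∑ z, (∑ y ∈ univ.filter (fun y => f y = z), M₀ x y) *
            Real.exp (τ * Real.log ((∑ y ∈ univ.filter (fun y => f y = z), M₀ x y) /
              (∑ y ∈ univ.filter (fun y => f y = z), M₀ x' y)))
          ≤ Real.exp (τ * (τ + 1) * ρ i))
    ∧ (∀ (P Q : Y → ℝ), (∀ y, 0 < P y) → (∀ y, 0 < Q y) →
        (∑ y, P y = 1) → (∑ y, Q y = 1) →
        ∀ τ : ℝ, 0 ≤ τ →
          ∑ z, (∑ y ∈ univ.filter (fun y => f y = z), P y) *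
              Real.exp (τ * Real.log ((∑ y ∈ univ.filter (fun y => f y = z), P y) /
                (∑ y ∈ univ.filter (fun y => f y = z), Q y)))
            ≤ ∑ y, P y * Real.exp (τ * Real.log (P y / Q y))) := by
  constructor
  · intro i x x' hxx' τ hτ
    exact le_trans (dpi f (M₀ x) (M₀ x') (hM₀pos x) (hM₀pos x') τ hτ)
      (hzCDP i x x' hxx' τ hτ)
  · intro P Q hP hQ _ _ τ hτ
    exact dpi f P Q hP hQ τ hτ
end

section
/- Exact characterization of approximate DP via privacy loss: a randomized mechanism M : 𝒳ⁿ → Y (with Y finite) satisfies (ε, δ⃗)-DP if and only if for every index i and every pair of datasets x, x′ differing in coordinate i, δ⃗(i) ≥ E_{Z ∼ PrivLoss(M(x) ‖ M(x′))}[max{0, 1 − e^{ε − Z}}]. Equivalently, sup_{E ⊆ Y} (Pr(M(x) ∈ E) − e^ε Pr(M(x′) ∈ E)) = E_{Y ∼ M(x)}[max{0, 1 − e^{ε − f(Y)}}] where f(y) = log(Pr(M(x)=y)/Pr(M(x′)=y)). -/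
open Finset

/-
The privacy-loss integrand is a disguised positive part: for `a, b > 0`,
`a · max 0 (1 − e^{ε − log (a/b)}) = max 0 (a − e^ε b)`. Summing over `y`, the expectation
becomes `∑ y, (M x y − e^ε M x' y)⁺`, and this is the largest value of
`Pr(M x ∈ E) − e^ε Pr(M x' ∈ E)`: every event gains at most the positive parts of its points,
and the event `{y | e^ε M x' y < M x y}` collects exactly them. `(ε, δ)`-DP says that `δ i`
bounds this gap for all events, i.e. bounds its maximum.
-/

lemma mul_max_zero_one_sub_exp_sub_log_div {a b : ℝ} (ha : 0 < a) (hb : 0 < b) (ε : ℝ) :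
    a * max 0 (1 - Real.exp (ε - Real.log (a / b))) = max 0 (a - Real.exp ε * b) := by
  have hexp : Real.exp (ε - Real.log (a / b)) = Real.exp ε * (b / a) := by
    rw [Real.exp_sub, Real.exp_log (div_pos ha hb)]
    field_simp
  rw [hexp, mul_max_of_nonneg _ _ ha.le, mul_zero]
  congr 1
  field_simp

section Events

variable {Y : Type*} [Fintype Y]

lemma sum_sub_mul_sum_le_sum_max_zero (p q : Y → ℝ) (c : ℝ) (E : Finset Y) :
    ∑ y ∈ E, p y - c * ∑ y ∈ E, q y ≤ ∑ y, max 0 (p y - c * q y) := by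
  rw [mul_sum, ← sum_sub_distrib]
  calc ∑ y ∈ E, (p y - c * q y)
      ≤ ∑ y ∈ E, max 0 (p y - c * q y) := sum_le_sum fun y _ => le_max_right _ _
    _ ≤ ∑ y, max 0 (p y - c * q y) :=
        sum_le_sum_of_subset_of_nonneg (subset_univ E) fun y _ _ => le_max_left _ _

lemma sum_max_zero_eq_sum_filter (p q : Y → ℝ) (c : ℝ) :
    ∑ y, max 0 (p y - c * q y) =
      ∑ y ∈ univ.filter (fun y => c * q y < p y), p y
        - c * ∑ y ∈ univ.filter (fun y => c * q y < p y), q y := by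
  rw [mul_sum, ← sum_sub_distrib, sum_filter]
  refine sum_congr rfl fun y _ => ?_
  split_ifs with h
  · exact max_eq_right (by linarith)
  · exact max_eq_left (by linarith)

theorem isGreatest_sum_sub_mul_sum (p q : Y → ℝ) (c : ℝ) :
    IsGreatest {v | ∃ E : Finset Y, v = ∑ y ∈ E, p y - c * ∑ y ∈ E, q y}
      (∑ y, max 0 (p y - c * q y)) :=
  ⟨⟨_, sum_max_zero_eq_sum_filter p q c⟩, by
    rintro v ⟨E, rfl⟩
    exact sum_sub_mul_sum_le_sum_max_zero p q c E⟩

theorem forall_sum_le_mul_sum_add_iff (p q : Y → ℝ) (c d : ℝ) :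
    (∀ E : Finset Y, ∑ y ∈ E, p y ≤ c * ∑ y ∈ E, q y + d) ↔
      ∑ y, max 0 (p y - c * q y) ≤ d := by
  rw [isLUB_le_iff (isGreatest_sum_sub_mul_sum p q c).isLUB, mem_upperBounds]
  refine ⟨fun h v ⟨E, hv⟩ => ?_, fun h E => ?_⟩
  · linarith [h E]
  · linarith [h _ ⟨E, rfl⟩]

end Events

theorem stmt9_general {X Y : Type*} [Fintype Y] {n : ℕ}
    (M : (Fin n → X) → Y → ℝ)
    (hMpos : ∀ x y, 0 < M x y)
    (ε : ℝ) (δ : Fin n → ℝ) :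
    ((∀ (i : Fin n) (x x' : Fin n → X), (∀ j, j ≠ i → x j = x' j) →
        ∀ E : Finset Y, ∑ y ∈ E, M x y ≤ Real.exp ε * ∑ y ∈ E, M x' y + δ i)
      ↔ (∀ (i : Fin n) (x x' : Fin n → X), (∀ j, j ≠ i → x j = x' j) →
          ∑ y, M x y * max 0 (1 - Real.exp (ε - Real.log (M x y / M x' y))) ≤ δ i))
    ∧ (∀ x x' : Fin n → X,
        IsGreatest {v : ℝ | ∃ E : Finset Y, v = ∑ y ∈ E, M x y - Real.exp ε * ∑ y ∈ E, M x' y}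
          (∑ y, M x y * max 0 (1 - Real.exp (ε - Real.log (M x y / M x' y))))) := by
  have privLoss_eq : ∀ x x' : Fin n → X,
      ∑ y, M x y * max 0 (1 - Real.exp (ε - Real.log (M x y / M x' y)))
        = ∑ y, max 0 (M x y - Real.exp ε * M x' y) := fun x x' =>
    sum_congr rfl fun y _ => mul_max_zero_one_sub_exp_sub_log_div (hMpos x y) (hMpos x' y) ε
  simp only [privLoss_eq]
  exact ⟨by simp only [forall_sum_le_mul_sum_add_iff],
    fun x x' => isGreatest_sum_sub_mul_sum _ _ _⟩

/-- Exact characterization of approximate DP via the privacy loss: `M` satisfies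
`(ε, δ⃗)`-DP iff for every pair of neighboring datasets
`δ⃗ i ≥ E_{Y ∼ M x}[max {0, 1 − e^{ε − f(Y)}}]` where
`f y = log (M x y / M x' y)`; moreover that expectation is the greatest value of
`Pr(M x ∈ E) − e^ε Pr(M x' ∈ E)` over events `E`. -/
theorem stmt9 {X Y : Type*} [Fintype Y] {n : ℕ}
    (M : (Fin n → X) → Y → ℝ)
    (hMpos : ∀ x y, 0 < M x y) (hM1 : ∀ x, ∑ y, M x y = 1)
    (ε : ℝ) (hε : 0 ≤ ε) (δ : Fin n → ℝ) :
    ((∀ (i : Fin n) (x x' : Fin n → X), (∀ j, j ≠ i → x j = x' j) →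
        ∀ E : Finset Y, ∑ y ∈ E, M x y ≤ Real.exp ε * ∑ y ∈ E, M x' y + δ i)
      ↔ (∀ (i : Fin n) (x x' : Fin n → X), (∀ j, j ≠ i → x j = x' j) →
          ∑ y, M x y * max 0 (1 - Real.exp (ε - Real.log (M x y / M x' y))) ≤ δ i))
    ∧ (∀ x x' : Fin n → X,
        IsGreatest {v : ℝ | ∃ E : Finset Y, v = ∑ y ∈ E, M x y - Real.exp ε * ∑ y ∈ E, M x' y}
          (∑ y, M x y * max 0 (1 - Real.exp (ε - Real.log (M x y / M x' y))))) :=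
  stmt9_general M hMpos ε δ
end

section
/- Rényi-DP to approximate DP conversion: let P, Q be discrete distributions on a finite set, let α > 1, ε ≥ 0, and ρ ≥ 0, and suppose the Rényi divergence of order α satisfies D_α(P ‖ Q) ≤ ρ, i.e., E_{Z ∼ PrivLoss(P‖Q)}[e^{(α−1)Z}] ≤ e^{(α−1)ρ}. Then E_{Z ∼ PrivLoss(P‖Q)}[max{0, 1 − e^{ε − Z}}] ≤ (e^{(α−1)(ρ−ε)}/(α−1)) · (1 − 1/α)^α. -/
open Finset

private lemma amgm_aux {α : ℝ} (hα : 1 < α) {t : ℝ} (ht : 0 < t) (ht1 : t ≤ 1) :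
    (1 - t) * t ^ (α - 1) ≤ (1 - 1 / α) ^ α / (α - 1) := by
  have hα0 : (0:ℝ) < α := by linarith
  have hα1 : (0:ℝ) < α - 1 := by linarith
  have h1t : 0 ≤ 1 - t := by linarith
  set p₁ : ℝ := t * (α / (α - 1)) with hp₁def
  set p₂ : ℝ := (1 - t) * α with hp₂def
  have hp₁ : 0 ≤ p₁ := by positivity
  have hp₂ : 0 ≤ p₂ := by positivity
  have hw : (α - 1) / α + 1 / α = 1 := by field_simp; ring
  have hgm := Real.geom_mean_le_arith_mean2_weighted
    (by positivity) (by positivity) hp₁ hp₂ hw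
  have hsum : (α - 1) / α * p₁ + 1 / α * p₂ = 1 := by
    rw [hp₁def, hp₂def]; field_simp; ring
  rw [hsum] at hgm
  have hbase : 0 ≤ p₁ ^ ((α - 1) / α) * p₂ ^ (1 / α) := by positivity
  have h2 : (p₁ ^ ((α - 1) / α) * p₂ ^ (1 / α)) ^ α ≤ 1 := by
    have := Real.rpow_le_rpow hbase hgm hα0.le
    simpa using this
  have e1 : (p₁ ^ ((α - 1) / α) * p₂ ^ (1 / α)) ^ α = p₁ ^ (α - 1) * p₂ := by
    rw [Real.mul_rpow (by positivity) (by positivity),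
      ← Real.rpow_mul hp₁, ← Real.rpow_mul hp₂,
      div_mul_cancel₀ _ hα0.ne', one_div, inv_mul_cancel₀ hα0.ne',
      Real.rpow_one]
  rw [e1] at h2
  -- expand p₁ ^ (α - 1)
  have e2 : p₁ ^ (α - 1) = t ^ (α - 1) * (α / (α - 1)) ^ (α - 1) := by
    rw [hp₁def, Real.mul_rpow ht.le (by positivity)]
  rw [e2, hp₂def] at h2
  -- h2 : t ^ (α - 1) * (α / (α - 1)) ^ (α - 1) * ((1 - t) * α) ≤ 1
  have hK : 0 < (α / (α - 1)) ^ (α - 1) * α := by positivity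
  have key : (1 - t) * t ^ (α - 1) * ((α / (α - 1)) ^ (α - 1) * α) ≤ 1 := by
    nlinarith [h2]
  have hle : (1 - t) * t ^ (α - 1) ≤ 1 / ((α / (α - 1)) ^ (α - 1) * α) :=
    (le_div_iff₀ hK).mpr key
  refine hle.trans_eq ?_
  -- show 1 / K = (1 - 1/α)^α / (α - 1)
  have hb : (1:ℝ) - 1 / α = (α / (α - 1))⁻¹ := by
    rw [inv_div]; field_simp
  have hbpos : (0:ℝ) < 1 - 1 / α := by
    rw [hb]; positivity
  have e3 : ((1:ℝ) - 1 / α) ^ α = (1 - 1 / α) ^ (α - 1) * (1 - 1 / α) := by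
    rw [← Real.rpow_add_one hbpos.ne' (α - 1)]; ring_nf
  rw [e3, hb, Real.inv_rpow (by positivity)]
  rw [inv_div]
  field_simp

private lemma pointwise_aux {α ε : ℝ} (hα : 1 < α) (z : ℝ) :
    max 0 (1 - Real.exp (ε - z))
      ≤ Real.exp ((1 - α) * ε) / (α - 1) * (1 - 1 / α) ^ α * Real.exp ((α - 1) * z) := by
  have hα0 : (0:ℝ) < α := by linarith
  have hα1 : (0:ℝ) < α - 1 := by linarith
  have hbpos : (0:ℝ) < 1 - 1 / α := by
    have : 1 / α < 1 := by rw [div_lt_one hα0]; linarith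
    linarith
  have hRpos : 0 < Real.exp ((1 - α) * ε) / (α - 1) * (1 - 1 / α) ^ α
      * Real.exp ((α - 1) * z) := by positivity
  rcases le_or_gt 1 (Real.exp (ε - z)) with h | h
  · have : 1 - Real.exp (ε - z) ≤ 0 := by linarith
    calc max 0 (1 - Real.exp (ε - z)) ≤ 0 := max_le le_rfl this
      _ ≤ _ := hRpos.le
  · set t := Real.exp (ε - z) with htdef
    have ht : 0 < t := Real.exp_pos _
    have hag := amgm_aux hα ht h.le
    have htpow : 0 < t ^ (α - 1) := Real.rpow_pos_of_pos ht _
    have h1 : 1 - t ≤ (1 - 1 / α) ^ α / (α - 1) / t ^ (α - 1) := by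
      rw [le_div_iff₀ htpow]; linarith [hag]
    have e4 : (1 - 1 / α) ^ α / (α - 1) / t ^ (α - 1)
        = Real.exp ((1 - α) * ε) / (α - 1) * (1 - 1 / α) ^ α
          * Real.exp ((α - 1) * z) := by
      rw [htdef, ← Real.exp_mul]
      have hinv : Real.exp ((1 - α) * ε) * Real.exp ((α - 1) * z)
          = (Real.exp ((ε - z) * (α - 1)))⁻¹ := by
        rw [← Real.exp_add, ← Real.exp_neg]; congr 1; ring
      rw [show Real.exp ((1 - α) * ε) / (α - 1) * (1 - 1 / α) ^ α
            * Real.exp ((α - 1) * z)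
          = Real.exp ((1 - α) * ε) * Real.exp ((α - 1) * z)
            * ((1 - 1 / α) ^ α / (α - 1)) from by ring, hinv]
      field_simp
    rw [e4] at h1
    exact max_le hRpos.le h1

/-- Rényi-DP to approximate DP conversion: if the order-`α` Rényi divergence of `P`
from `Q` is at most `ρ` (expressed via the MGF of the privacy loss), then
`E_{Z ∼ PrivLoss(P‖Q)}[max {0, 1 − e^{ε − Z}}] ≤ (e^{(α−1)(ρ−ε)}/(α−1)) (1 − 1/α)^α`. -/
theorem stmt10 {Y : Type*} [Fintype Y]
    (P Q : Y → ℝ) (hP : ∀ y, 0 < P y) (hQ : ∀ y, 0 < Q y)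
    (hP1 : ∑ y, P y = 1) (hQ1 : ∑ y, Q y = 1)
    (α ε ρ : ℝ) (hα : 1 < α) (hε : 0 ≤ ε) (hρ : 0 ≤ ρ)
    (hRenyi : ∑ y, P y * Real.exp ((α - 1) * Real.log (P y / Q y))
      ≤ Real.exp ((α - 1) * ρ)) :
    ∑ y, P y * max 0 (1 - Real.exp (ε - Real.log (P y / Q y)))
      ≤ Real.exp ((α - 1) * (ρ - ε)) / (α - 1) * (1 - 1 / α) ^ α := by
  have hα1 : (0:ℝ) < α - 1 := by linarith
  set c : ℝ := Real.exp ((1 - α) * ε) / (α - 1) * (1 - 1 / α) ^ α with hcdef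
  have hbpos : (0:ℝ) < 1 - 1 / α := by
    have : 1 / α < 1 := by rw [div_lt_one (by linarith)]; linarith
    linarith
  have hc : 0 < c := by rw [hcdef]; positivity
  have step1 : ∑ y, P y * max 0 (1 - Real.exp (ε - Real.log (P y / Q y)))
      ≤ ∑ y, P y * (c * Real.exp ((α - 1) * Real.log (P y / Q y))) := by
    apply Finset.sum_le_sum
    intro y _
    exact mul_le_mul_of_nonneg_left (pointwise_aux hα _) (hP y).le
  have step2 : ∑ y, P y * (c * Real.exp ((α - 1) * Real.log (P y / Q y)))
      = c * ∑ y, P y * Real.exp ((α - 1) * Real.log (P y / Q y)) := by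
    rw [Finset.mul_sum]; congr 1; ext y; ring
  have step3 : c * ∑ y, P y * Real.exp ((α - 1) * Real.log (P y / Q y))
      ≤ c * Real.exp ((α - 1) * ρ) :=
    mul_le_mul_of_nonneg_left hRenyi hc.le
  have final : c * Real.exp ((α - 1) * ρ)
      = Real.exp ((α - 1) * (ρ - ε)) / (α - 1) * (1 - 1 / α) ^ α := by
    rw [hcdef]
    rw [show Real.exp ((1 - α) * ε) / (α - 1) * (1 - 1 / α) ^ α
          * Real.exp ((α - 1) * ρ)
        = Real.exp ((1 - α) * ε) * Real.exp ((α - 1) * ρ) / (α - 1)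
          * (1 - 1 / α) ^ α from by ring, ← Real.exp_add]
    congr 3
    ring
  calc ∑ y, P y * max 0 (1 - Real.exp (ε - Real.log (P y / Q y)))
      ≤ c * ∑ y, P y * Real.exp ((α - 1) * Real.log (P y / Q y)) := by
        rw [← step2]; exact step1
    _ ≤ c * Real.exp ((α - 1) * ρ) := step3
    _ = _ := final
end

section
/- Pointwise majorization underlying the Rényi-to-approximate-DP conversion: for every α > 1, ε ∈ ℝ, and z ∈ ℝ, max{0, 1 − e^{ε − z}} ≤ c · e^{(α−1)z} where c = (e^{ε(1−α)}/(α−1)) · (1 − 1/α)^α; moreover c is the smallest constant for which the inequality holds for all z ∈ ℝ. -/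
lemma key11 (α : ℝ) (hα : 1 < α) (t : ℝ) (ht : 0 < t) :
    (1 - t) * t ^ (α - 1) ≤ (α - 1) ^ (α - 1) / α ^ α := by
  have hα0 : (0:ℝ) < α := by linarith
  have hA : (0:ℝ) < α - 1 := by linarith
  have hKpos : 0 < (α - 1) ^ (α - 1) / α ^ α := by positivity
  rcases le_or_gt 1 t with h1 | h1
  · have : (1 - t) * t ^ (α - 1) ≤ 0 := by
      apply mul_nonpos_of_nonpos_of_nonneg
      · linarith
      · positivity
    linarith
  have hp₁ : (0:ℝ) ≤ α * (1 - t) := by nlinarith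
  have hp₂ : (0:ℝ) ≤ α / (α - 1) * t := by positivity
  have hw : 1/α + (α-1)/α = 1 := by field_simp; ring
  have hgm := Real.geom_mean_le_arith_mean2_weighted (by positivity : (0:ℝ) ≤ 1/α)
    (by positivity : (0:ℝ) ≤ (α-1)/α) hp₁ hp₂ hw
  have hrhs : 1/α * (α * (1-t)) + (α-1)/α * (α/(α-1) * t) = 1 := by
    field_simp; ring
  rw [hrhs] at hgm
  have h2 : ((α * (1 - t)) ^ (1/α) * (α / (α - 1) * t) ^ ((α-1)/α)) ^ α ≤ 1 := by
    calc ((α * (1 - t)) ^ (1/α) * (α / (α - 1) * t) ^ ((α-1)/α)) ^ α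
        ≤ 1 ^ α := Real.rpow_le_rpow (by positivity) hgm (le_of_lt hα0)
      _ = 1 := Real.one_rpow α
  rw [Real.mul_rpow (by positivity) (by positivity), ← Real.rpow_mul hp₁,
    ← Real.rpow_mul hp₂, one_div_mul_cancel (ne_of_gt hα0),
    div_mul_cancel₀ _ (ne_of_gt hα0), Real.rpow_one,
    Real.mul_rpow (by positivity) (le_of_lt ht)] at h2
  set P := (α / (α - 1)) ^ (α - 1) with hPdef
  have hP : 0 < P := by positivity
  have hPA : P * (α - 1) ^ (α - 1) = α ^ (α - 1) := by
    rw [hPdef, ← Real.mul_rpow (by positivity) (le_of_lt hA),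
      div_mul_cancel₀ _ (ne_of_gt hA)]
  have hαα : α ^ α = α * α ^ (α - 1) := by
    rw [← Real.rpow_one_add' (le_of_lt hα0) (by linarith)]
    ring_nf
  -- from h2 : α * (1 - t) * (P * t ^ (α-1)) ≤ 1
  have h3 : (1 - t) * t ^ (α - 1) ≤ 1 / (α * P) := by
    rw [le_div_iff₀ (by positivity)]
    nlinarith [h2]
  have h4 : 1 / (α * P) = (α - 1) ^ (α - 1) / α ^ α := by
    rw [hαα, eq_div_iff (by positivity)]
    field_simp
    nlinarith [hPA]
  linarith [h4 ▸ h3]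

/-- Pointwise majorization underlying the Rényi-to-approximate-DP conversion:
for every `α > 1`, `ε`, `z`, `max {0, 1 − e^{ε − z}} ≤ c e^{(α−1) z}` with
`c = (e^{ε(1−α)}/(α−1)) (1 − 1/α)^α`, and `c` is the smallest such constant. -/
theorem stmt11 (α ε : ℝ) (hα : 1 < α) :
    (∀ z : ℝ, max 0 (1 - Real.exp (ε - z))
        ≤ (Real.exp (ε * (1 - α)) / (α - 1) * (1 - 1 / α) ^ α) * Real.exp ((α - 1) * z))
    ∧ (∀ c' : ℝ,
        (∀ z : ℝ, max 0 (1 - Real.exp (ε - z)) ≤ c' * Real.exp ((α - 1) * z)) →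
        Real.exp (ε * (1 - α)) / (α - 1) * (1 - 1 / α) ^ α ≤ c') := by
  have hα0 : (0:ℝ) < α := by linarith
  have hA : (0:ℝ) < α - 1 := by linarith
  have hαα : α ^ α = α * α ^ (α - 1) := by
    rw [← Real.rpow_one_add' (le_of_lt hα0) (by linarith)]; ring_nf
  have hc : Real.exp (ε * (1 - α)) / (α - 1) * (1 - 1 / α) ^ α
      = Real.exp (ε * (1 - α)) * ((α - 1) ^ (α - 1) / α ^ α) := by
    have h1 : (1 - 1/α : ℝ) = (α - 1)/α := by field_simp
    rw [h1, Real.div_rpow (le_of_lt hA) (le_of_lt hα0)]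
    have h2 : (α - 1) ^ α = (α - 1) ^ (α - 1) * (α - 1) := by
      rw [← Real.rpow_add_one (ne_of_gt hA)]; norm_num
    rw [h2]; field_simp
  have hcpos : 0 < Real.exp (ε * (1 - α)) * ((α - 1) ^ (α - 1) / α ^ α) := by positivity
  constructor
  · intro z
    rw [hc]
    apply max_le
    · positivity
    · have hk := key11 α hα (Real.exp (ε - z)) (Real.exp_pos _)
      have ht : Real.exp (ε - z) ^ (α - 1) = Real.exp ((ε - z) * (α - 1)) := by
        rw [← Real.exp_mul]
      rw [ht] at hk
      have hpos : 0 < Real.exp ((ε - z) * (α - 1)) := Real.exp_pos _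
      rw [← le_div_iff₀ hpos] at hk
      have hone : Real.exp (ε * (1 - α)) * Real.exp ((α - 1) * z) * Real.exp ((ε - z) * (α - 1)) = 1 := by
        rw [← Real.exp_add, ← Real.exp_add,
          show ε * (1 - α) + (α - 1) * z + (ε - z) * (α - 1) = 0 by ring, Real.exp_zero]
      calc 1 - Real.exp (ε - z)
          ≤ (α - 1) ^ (α - 1) / α ^ α / Real.exp ((ε - z) * (α - 1)) := hk
        _ = Real.exp (ε * (1 - α)) * ((α - 1) ^ (α - 1) / α ^ α) * Real.exp ((α - 1) * z) := by
            rw [div_eq_iff (ne_of_gt hpos)]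
            linear_combination (-((α - 1) ^ (α - 1) / α ^ α)) * hone
  · intro c' hcc
    have hz := hcc (ε + Real.log (α / (α - 1)))
    have he : Real.exp (ε - (ε + Real.log (α / (α - 1)))) = (α - 1)/α := by
      rw [show ε - (ε + Real.log (α / (α - 1))) = -Real.log (α / (α - 1)) by ring,
        Real.exp_neg, Real.exp_log (by positivity)]
      field_simp
    rw [he] at hz
    have h1α : max 0 (1 - (α - 1)/α) = 1/α := by
      rw [max_eq_right]
      · field_simp; ring
      · rw [sub_nonneg, div_le_one hα0]; linarith
    rw [h1α] at hz
    have hez : Real.exp ((α - 1) * (ε + Real.log (α / (α - 1))))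
        = Real.exp ((α - 1) * ε) * (α / (α - 1)) ^ (α - 1) := by
      rw [mul_add, Real.exp_add]
      congr 1
      rw [Real.rpow_def_of_pos (by positivity), mul_comm]
    rw [hez] at hz
    rw [hc]
    have hPA : (α/(α-1))^(α-1) * (α-1)^(α-1) = α^(α-1) := by
      rw [← Real.mul_rpow (by positivity) (le_of_lt hA), div_mul_cancel₀ _ (ne_of_gt hA)]
    have hexp : Real.exp (ε * (1 - α)) * Real.exp ((α - 1) * ε) = 1 := by
      rw [← Real.exp_add, show ε * (1 - α) + (α - 1) * ε = 0 by ring, Real.exp_zero]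
    have hKP : ((α - 1) ^ (α - 1) / α ^ α) * (α / (α - 1)) ^ (α - 1) = 1/α := by
      rw [hαα, div_mul_eq_mul_div, mul_comm, hPA]
      rw [div_eq_div_iff (by positivity) (ne_of_gt hα0)]
      ring
    have hq : Real.exp (ε * (1 - α)) * ((α - 1) ^ (α - 1) / α ^ α)
        * (Real.exp ((α - 1) * ε) * (α / (α - 1)) ^ (α - 1)) = 1/α := by
      calc Real.exp (ε * (1 - α)) * ((α - 1) ^ (α - 1) / α ^ α)
            * (Real.exp ((α - 1) * ε) * (α / (α - 1)) ^ (α - 1))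
          = (Real.exp (ε * (1 - α)) * Real.exp ((α - 1) * ε))
            * (((α - 1) ^ (α - 1) / α ^ α) * (α / (α - 1)) ^ (α - 1)) := by ring
        _ = 1 * (1/α) := by rw [hexp, hKP]
        _ = 1/α := by ring
    have hepos : 0 < Real.exp ((α - 1) * ε) * (α / (α - 1)) ^ (α - 1) := by positivity
    calc Real.exp (ε * (1 - α)) * ((α - 1) ^ (α - 1) / α ^ α)
        = 1/α / (Real.exp ((α - 1) * ε) * (α / (α - 1)) ^ (α - 1)) := by
          rw [eq_div_iff (ne_of_gt hepos)]; exact hq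
      _ ≤ c' := by
          rw [div_le_iff₀ hepos]; linarith
end

section
/- DP-to-posterior-stability for statistical queries (static special case): Let X = (X₁,…,X_n) ∼ 𝒫ⁿ on a finite set 𝒳 and let Π be a transcript generated by an (ε, δ)-DP interaction that outputs pairs (q, r) where each q : 𝒳 → [0,1] is a statistical query. For each transcript π let (q*, t*) achieve the maximum of |q(𝒬_π) − q(𝒫)| over recorded queries, where 𝒬_π is the posterior of X given Π = π and q(𝒟) = E_{x∼𝒟}[q(x)], and suppose the full dataset of size n is available throughout (n₀ = n). Then for any c > 0, Pr(|q*(𝒬_Π) − q*(𝒫)| > e^ε − 1 + 2cδ) ≤ 1/c. -/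
open Finset


lemma layercake {T : Type*} [Fintype T] (μ ν : T → ℝ) (ε δ : ℝ) (hδ : 0 ≤ δ)
    (hE : ∀ E : Finset T, ∑ t ∈ E, μ t ≤ Real.exp ε * ∑ t ∈ E, ν t + δ) :
    ∀ (N : ℕ) (M : ℝ) (f : T → ℝ), 0 ≤ M → (∀ t, 0 ≤ f t) → (∀ t, f t ≤ M) →
      ((univ : Finset T).filter (fun t => f t ≠ 0)).card ≤ N →
      ∑ t, μ t * f t ≤ Real.exp ε * ∑ t, ν t * f t + δ * M := by
  classical
  intro N
  induction N with
  | zero =>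
    intro M f hM hf0 hfM hcard
    have hf : ∀ t, f t = 0 := by
      intro t
      by_contra h
      have ht : t ∈ (univ : Finset T).filter (fun t => f t ≠ 0) := by simp [h]
      have := Finset.card_pos.mpr ⟨t, ht⟩
      omega
    have h1 : ∑ t, μ t * f t = 0 := by simp [hf]
    have h2 : ∑ t, ν t * f t = 0 := by simp [hf]
    rw [h1, h2]
    have := mul_nonneg hδ hM
    linarith
  | succ N ih =>
    intro M f hM hf0 hfM hcard
    by_cases hz : ∀ t, f t = 0
    · have h1 : ∑ t, μ t * f t = 0 := by simp [hz]
      have h2 : ∑ t, ν t * f t = 0 := by simp [hz]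
      rw [h1, h2]
      have := mul_nonneg hδ hM
      linarith
    push_neg at hz
    obtain ⟨t₁, ht₁⟩ := hz
    have hne : ((univ : Finset T).filter (fun t => f t ≠ 0)).Nonempty := ⟨t₁, by simp [ht₁]⟩
    obtain ⟨t₀, ht₀s, hmin⟩ := Finset.exists_min_image _ f hne
    have hm0 : f t₀ ≠ 0 := (Finset.mem_filter.mp ht₀s).2
    have hmpos : 0 < f t₀ := lt_of_le_of_ne (hf0 t₀) (Ne.symm hm0)
    set mv := f t₀ with hmv
    set g : T → ℝ := fun t => if f t = 0 then 0 else f t - mv with hg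
    have hg0 : ∀ t, 0 ≤ g t := by
      intro t
      by_cases h : f t = 0
      · simp [hg, h]
      · have hts : t ∈ (univ : Finset T).filter (fun t => f t ≠ 0) := by simp [h]
        have := hmin t hts
        simp only [hg, h, if_false]
        linarith
    have hmM : mv ≤ M := hfM t₀
    have hgM : ∀ t, g t ≤ M - mv := by
      intro t
      by_cases h : f t = 0
      · simp [hg, h]; linarith
      · simp only [hg, h, if_false]
        linarith [hfM t]
    have hgcard : ((univ : Finset T).filter (fun t => g t ≠ 0)).card ≤ N := by
      have hsub : (univ : Finset T).filter (fun t => g t ≠ 0) ⊆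
          ((univ : Finset T).filter (fun t => f t ≠ 0)).erase t₀ := by
        intro t ht
        simp only [Finset.mem_filter, Finset.mem_univ, true_and] at ht
        have hft : f t ≠ 0 := by
          intro h; apply ht; simp [hg, h]
        refine Finset.mem_erase.mpr ⟨?_, by simp [hft]⟩
        intro h
        apply ht
        rw [h]
        simp [hg, hm0]
        intro _; simp [hmv]
      have h1 := Finset.card_le_card hsub
      have h2 := Finset.card_erase_of_mem ht₀s
      omega
    have hsplit : ∀ w : T → ℝ, ∑ t, w t * f t
        = ∑ t, w t * g t + mv * ∑ t ∈ (univ : Finset T).filter (fun t => f t ≠ 0), w t := by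
      intro w
      rw [Finset.mul_sum, Finset.sum_filter, ← Finset.sum_add_distrib]
      apply Finset.sum_congr rfl
      intro t _
      by_cases h : f t = 0 <;> simp [hg, h] <;> ring
    have hEs := hE ((univ : Finset T).filter (fun t => f t ≠ 0))
    have hih := ih (M - mv) g (by linarith) hg0 hgM hgcard
    rw [hsplit μ, hsplit ν]
    have hmul : mv * ∑ t ∈ (univ : Finset T).filter (fun t => f t ≠ 0), μ t
        ≤ mv * (Real.exp ε * ∑ t ∈ (univ : Finset T).filter (fun t => f t ≠ 0), ν t + δ) :=
      mul_le_mul_of_nonneg_left hEs (le_of_lt hmpos)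
    nlinarith [hih, hmul]

lemma prod_update_eq {X : Type*} [Fintype X] {n : ℕ} (p : X → ℝ) (x : Fin n → X)
    (t : Fin n) (v : X) :
    ∏ i, p (Function.update x t v i) = p v * ∏ i ∈ (univ : Finset (Fin n)).erase t, p (x i) := by
  rw [← Finset.mul_prod_erase univ _ (mem_univ t), Function.update_self]
  congr 1
  apply Finset.prod_congr rfl
  intro i hi
  rw [Function.update_of_ne (Finset.ne_of_mem_erase hi)]

lemma reindex_lemma {X : Type*} [Fintype X] {n : ℕ} (p : X → ℝ) (hp1 : ∑ x, p x = 1)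
    (t : Fin n) (G : (Fin n → X) → X → ℝ) :
    ∑ x : Fin n → X, (∏ i, p (x i)) * G x (x t)
      = ∑ x : Fin n → X, ∑ v : X, ((∏ i, p (x i)) * p v) * G (Function.update x t v) v := by
  classical
  have hσ : Function.Involutive
      (fun z : (Fin n → X) × X => (Function.update z.1 t z.2, z.1 t)) := by
    rintro ⟨x, v⟩
    refine Prod.ext ?_ ?_
    · show Function.update (Function.update x t v) t (x t) = x
      rw [Function.update_idem, Function.update_eq_self]
    · show Function.update x t v t = v
      rw [Function.update_self]
  set F : (Fin n → X) × X → ℝ :=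
    fun z => ((∏ i, p (z.1 i)) * p z.2) * G (Function.update z.1 t z.2) z.2 with hF
  have hsum : ∑ z : (Fin n → X) × X, F (hσ.toPerm _ z) = ∑ z, F z :=
    Equiv.sum_comp (hσ.toPerm _) F
  have hstep : ∀ x : Fin n → X, ∑ v : X, F (hσ.toPerm _ (x, v))
      = (∏ i, p (x i)) * G x (x t) := by
    intro x
    have hterm : ∀ v : X, F (hσ.toPerm _ (x, v))
        = p v * (((∏ i ∈ (univ : Finset (Fin n)).erase t, p (x i)) * p (x t)) * G x (x t)) := by
      intro v
      show ((∏ i, p (Function.update x t v i)) * p (x t))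
          * G (Function.update (Function.update x t v) t (x t)) (x t) = _
      rw [prod_update_eq, Function.update_idem, Function.update_eq_self]
      ring
    rw [Finset.sum_congr rfl (fun v _ => hterm v), ← Finset.sum_mul, hp1, one_mul,
      ← Finset.mul_prod_erase univ (fun i => p (x i)) (mem_univ t)]
    ring
  have h1 : ∑ z : (Fin n → X) × X, F (hσ.toPerm _ z)
      = ∑ x : Fin n → X, ∑ v : X, F (hσ.toPerm _ (x, v)) :=
    Fintype.sum_prod_type (f := fun z => F (hσ.toPerm _ z))
  have h2 : ∑ z : (Fin n → X) × X, F z = ∑ x : Fin n → X, ∑ v : X, F (x, v) :=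
    Fintype.sum_prod_type (f := F)
  calc ∑ x : Fin n → X, (∏ i, p (x i)) * G x (x t)
      = ∑ x : Fin n → X, ∑ v : X, F (hσ.toPerm _ (x, v)) := by
        exact (Finset.sum_congr rfl (fun x _ => (hstep x))).symm
    _ = ∑ z : (Fin n → X) × X, F (hσ.toPerm _ z) := h1.symm
    _ = ∑ z : (Fin n → X) × X, F z := hsum
    _ = ∑ x : Fin n → X, ∑ v : X, F (x, v) := h2
    _ = ∑ x : Fin n → X, ∑ v : X, ((∏ i, p (x i)) * p v) * G (Function.update x t v) v := rfl

/-- DP-to-posterior-stability for statistical queries (static case, uniform δ):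
let `X ∼ 𝒫ⁿ` and let the transcript be generated by an `(ε, δ)`-DP interaction
recording statistical queries. For each transcript let `qstar tr` achieve the
maximum of `|q(𝒬_tr) − q(𝒫)|` over the recorded queries, where `q(𝒬_tr)` averages
the posterior marginals of the coordinates and `q(𝒫)` is the true mean. Then for
any `c > 0`, `Pr(|qstar(𝒬_Π) − qstar(𝒫)| > e^ε − 1 + 2cδ) ≤ 1/c`. -/
theorem stmt16 {X T : Type*} [Fintype X] [Fintype T] {n : ℕ} (hn : 0 < n)
    (p : X → ℝ) (hp0 : ∀ x, 0 ≤ p x) (hp1 : ∑ x, p x = 1)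
    (k : (Fin n → X) → T → ℝ)
    (hk0 : ∀ x tr, 0 ≤ k x tr) (hk1 : ∀ x, ∑ tr, k x tr = 1)
    (ε δ : ℝ) (hε : 0 ≤ ε) (hδ : 0 ≤ δ)
    (hDP : ∀ (t : Fin n) (x x' : Fin n → X), (∀ j, j ≠ t → x j = x' j) →
      ∀ E : Finset T, ∑ tr ∈ E, k x tr ≤ Real.exp ε * ∑ tr ∈ E, k x' tr + δ)
    (queries : T → Finset (X → ℝ))
    (hqnonempty : ∀ tr, (queries tr).Nonempty)
    (hq01 : ∀ tr, ∀ q ∈ queries tr, ∀ x, q x ∈ Set.Icc (0 : ℝ) 1)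
    -- posterior value of a query: average over coordinates of the posterior marginals
    (postVal : (X → ℝ) → T → ℝ)
    (hpostVal : ∀ q tr, postVal q tr =
      (∑ t : Fin n, (∑ x : Fin n → X, (∏ i, p (x i)) * k x tr * q (x t)) /
        (∑ x : Fin n → X, (∏ i, p (x i)) * k x tr)) / n)
    -- true value of a query on the data distribution
    (trueVal : (X → ℝ) → ℝ) (htrueVal : ∀ q, trueVal q = ∑ x, p x * q x)
    (qstar : T → (X → ℝ))
    (hqstar_mem : ∀ tr, qstar tr ∈ queries tr)
    (hqstar_max : ∀ tr, ∀ q ∈ queries tr,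
      |postVal q tr - trueVal q| ≤ |postVal (qstar tr) tr - trueVal (qstar tr)|)
    (c : ℝ) (hc : 0 < c) :
    ∑ tr ∈ univ.filter (fun tr : T =>
        Real.exp ε - 1 + 2 * c * δ < |postVal (qstar tr) tr - trueVal (qstar tr)|),
      (∑ x : Fin n → X, (∏ i, p (x i)) * k x tr)
      ≤ 1 / c := by
  classical
  have hnpos : (0:ℝ) < n := by exact_mod_cast hn
  have hn' : (n:ℝ) ≠ 0 := ne_of_gt hnpos
  have hexp1 : (1:ℝ) ≤ Real.exp ε := by
    rw [← Real.exp_zero]; exact Real.exp_le_exp.mpr hε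
  set S : Finset T := univ.filter (fun tr : T =>
      Real.exp ε - 1 + 2 * c * δ < |postVal (qstar tr) tr - trueVal (qstar tr)|) with hSdef
  set m : T → ℝ := fun tr => ∑ x : Fin n → X, (∏ i, p (x i)) * k x tr with hmdef
  show ∑ tr ∈ S, m tr ≤ 1 / c
  have hP0 : ∀ x : Fin n → X, 0 ≤ ∏ i, p (x i) :=
    fun x => Finset.prod_nonneg fun i _ => hp0 _
  have hm0 : ∀ tr, 0 ≤ m tr :=
    fun tr => Finset.sum_nonneg fun x _ => mul_nonneg (hP0 x) (hk0 x tr)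
  have hPsum : ∑ x : Fin n → X, ∏ i, p (x i) = 1 := by
    rw [← Fintype.piFinset_univ, ← Finset.prod_univ_sum]
    simp [hp1]
  -- the sign-corrected query
  set q' : T → X → ℝ := fun tr =>
    if trueVal (qstar tr) ≤ postVal (qstar tr) tr then qstar tr
    else fun x => 1 - qstar tr x with hq'def
  have hq'0 : ∀ tr x, 0 ≤ q' tr x := by
    intro tr x
    have h := hq01 tr (qstar tr) (hqstar_mem tr) x
    by_cases h' : trueVal (qstar tr) ≤ postVal (qstar tr) tr
    · simp only [hq'def, if_pos h']; exact h.1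
    · simp only [hq'def, if_neg h']; linarith [h.2]
  have hq'1 : ∀ tr x, q' tr x ≤ 1 := by
    intro tr x
    have h := hq01 tr (qstar tr) (hqstar_mem tr) x
    by_cases h' : trueVal (qstar tr) ≤ postVal (qstar tr) tr
    · simp only [hq'def, if_pos h']; exact h.2
    · simp only [hq'def, if_neg h']; linarith [h.1]
  set Nv : (X → ℝ) → T → Fin n → ℝ :=
    fun q tr t => ∑ x : Fin n → X, (∏ i, p (x i)) * k x tr * q (x t) with hNvdef
  have hNv0 : ∀ tr t, 0 ≤ Nv (q' tr) tr t := by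
    intro tr t
    exact Finset.sum_nonneg fun x _ =>
      mul_nonneg (mul_nonneg (hP0 x) (hk0 x tr)) (hq'0 tr (x t))
  have hNvm : ∀ tr t, Nv (q' tr) tr t ≤ m tr := by
    intro tr t
    apply Finset.sum_le_sum
    intro x _
    have := hq'1 tr (x t)
    have h1 : 0 ≤ (∏ i, p (x i)) * k x tr := mul_nonneg (hP0 x) (hk0 x tr)
    nlinarith
  have hNvflip : ∀ (q : X → ℝ) tr t, Nv (fun x => 1 - q x) tr t = m tr - Nv q tr t := by
    intro q tr t
    simp only [hNvdef, hmdef, mul_sub, mul_one, Finset.sum_sub_distrib]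
  have htvflip : ∀ q : X → ℝ, trueVal (fun x => 1 - q x) = 1 - trueVal q := by
    intro q
    rw [htrueVal, htrueVal]
    simp [mul_sub, Finset.sum_sub_distrib, hp1]
  have htv0 : ∀ tr, 0 ≤ trueVal (q' tr) := by
    intro tr
    rw [htrueVal]
    exact Finset.sum_nonneg fun v _ => mul_nonneg (hp0 v) (hq'0 tr v)
  have htv1 : ∀ tr, trueVal (q' tr) ≤ 1 := by
    intro tr
    rw [htrueVal, ← hp1]
    apply Finset.sum_le_sum
    intro v _
    have := hq'1 tr v
    nlinarith [hp0 v]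
  have hpostm : ∀ (q : X → ℝ) tr, m tr ≠ 0 →
      m tr * postVal q tr = (∑ t, Nv q tr t) / n := by
    intro q tr hmz
    rw [hpostVal]
    have : ∀ t : Fin n, (∑ x : Fin n → X, (∏ i, p (x i)) * k x tr * q (x t)) /
        (∑ x : Fin n → X, (∏ i, p (x i)) * k x tr) = Nv q tr t / m tr := by
      intro t; rfl
    rw [Finset.sum_congr rfl (fun t _ => this t), ← Finset.sum_div]
    field_simp
  have key1 : ∀ tr, m tr * |postVal (qstar tr) tr - trueVal (qstar tr)|
      = (∑ t, Nv (q' tr) tr t) / n - m tr * trueVal (q' tr) := by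
    intro tr
    by_cases hmz : m tr = 0
    · have h0 : ∀ t, Nv (q' tr) tr t = 0 :=
        fun t => le_antisymm (by rw [← hmz]; exact hNvm tr t) (hNv0 tr t)
      rw [hmz, Finset.sum_congr rfl (fun t _ => h0 t)]
      simp
    · by_cases hsign : trueVal (qstar tr) ≤ postVal (qstar tr) tr
      · have hq'eq : q' tr = qstar tr := by simp only [hq'def, if_pos hsign]
        rw [hq'eq, abs_of_nonneg (by linarith), mul_sub, hpostm _ _ hmz]
      · push_neg at hsign
        have hq'eq : q' tr = fun x => 1 - qstar tr x := by
          simp only [hq'def, if_neg (not_le.mpr hsign)]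
        rw [hq'eq, abs_of_neg (by linarith)]
        have h1 := hpostm (qstar tr) tr hmz
        have h2 : ∑ t : Fin n, Nv (fun x => 1 - qstar tr x) tr t
            = n * m tr - ∑ t, Nv (qstar tr) tr t := by
          rw [Finset.sum_congr rfl (fun t _ => hNvflip (qstar tr) tr t),
            Finset.sum_sub_distrib, Finset.sum_const, card_univ, Fintype.card_fin,
            nsmul_eq_mul]
        rw [htvflip, h2]
        have h3 : (↑n * m tr - ∑ t, Nv (qstar tr) tr t) / ↑n
            = m tr - (∑ t, Nv (qstar tr) tr t) / ↑n := by
          rw [sub_div, mul_div_cancel_left₀ _ hn']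
        rw [h3]
        nlinarith [h1]
  have key2 : ∑ tr ∈ S, ((∑ t, Nv (q' tr) tr t) / n - m tr * trueVal (q' tr))
      = (∑ t : Fin n, ((∑ tr ∈ S, Nv (q' tr) tr t)
          - ∑ tr ∈ S, m tr * trueVal (q' tr))) / n := by
    have hcomm : ∑ tr ∈ S, ∑ t : Fin n, Nv (q' tr) tr t
        = ∑ t : Fin n, ∑ tr ∈ S, Nv (q' tr) tr t := Finset.sum_comm
    rw [Finset.sum_sub_distrib, ← Finset.sum_div, hcomm, Finset.sum_sub_distrib,
      Finset.sum_const, card_univ, Fintype.card_fin, nsmul_eq_mul, sub_div,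
      mul_div_cancel_left₀ _ hn']
  have key4 : ∀ t : Fin n, (∑ tr ∈ S, Nv (q' tr) tr t)
      - (∑ tr ∈ S, m tr * trueVal (q' tr))
      ≤ (Real.exp ε - 1) * (∑ tr ∈ S, m tr) + δ := by
    intro t
    set G : (Fin n → X) → X → ℝ := fun x v => ∑ tr ∈ S, k x tr * q' tr v with hGdef
    have hA : ∑ tr ∈ S, Nv (q' tr) tr t
        = ∑ x : Fin n → X, (∏ i, p (x i)) * G x (x t) := by
      simp only [hNvdef]
      rw [Finset.sum_comm]
      apply Finset.sum_congr rfl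
      intro x _
      rw [hGdef, Finset.mul_sum]
      apply Finset.sum_congr rfl
      intro tr _
      ring
    have hB : ∑ tr ∈ S, m tr * trueVal (q' tr)
        = ∑ x : Fin n → X, ∑ v : X, ((∏ i, p (x i)) * p v) * G x v := by
      have e1 : ∀ tr, m tr * trueVal (q' tr)
          = ∑ x : Fin n → X, ∑ v : X, ((∏ i, p (x i)) * k x tr) * (p v * q' tr v) := by
        intro tr
        rw [hmdef, htrueVal]
        exact Finset.sum_mul_sum _ _ _ _
      rw [Finset.sum_congr rfl (fun tr _ => e1 tr), Finset.sum_comm]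
      apply Finset.sum_congr rfl
      intro x _
      rw [Finset.sum_comm]
      apply Finset.sum_congr rfl
      intro v _
      rw [hGdef, Finset.mul_sum]
      apply Finset.sum_congr rfl
      intro tr _
      ring
    have hpt : ∀ (x : Fin n → X) (v : X),
        G (Function.update x t v) v ≤ Real.exp ε * G x v + δ := by
      intro x v
      have hadj : ∀ j, j ≠ t → Function.update x t v j = x j :=
        fun j hj => Function.update_of_ne hj v x
      have hEb := hDP t (Function.update x t v) x hadj
      have hl := layercake (k (Function.update x t v)) (k x) ε δ hδ hEb
        (Fintype.card T) 1 (fun tr => if tr ∈ S then q' tr v else 0) zero_le_one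
        (fun tr => by by_cases h : tr ∈ S <;> simp [h, hq'0 tr v])
        (fun tr => by by_cases h : tr ∈ S <;> simp [h, hq'1 tr v])
        (le_trans (Finset.card_filter_le _ _) (le_of_eq (Finset.card_univ)))
      have hconv : ∀ y : Fin n → X,
          ∑ tr, k y tr * (if tr ∈ S then q' tr v else 0) = G y v := by
        intro y
        rw [hGdef]
        simp only [mul_ite, mul_zero]
        rw [← Finset.sum_filter, Finset.filter_univ_mem]
      rw [hconv, hconv, mul_one] at hl
      exact hl
    have hw : ∑ x : Fin n → X, ∑ v : X, (∏ i, p (x i)) * p v = 1 := by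
      have : ∀ x : Fin n → X, ∑ v : X, (∏ i, p (x i)) * p v = ∏ i, p (x i) := by
        intro x
        rw [← Finset.mul_sum, hp1, mul_one]
      rw [Finset.sum_congr rfl (fun x _ => this x), hPsum]
    have hAle : ∑ tr ∈ S, Nv (q' tr) tr t
        ≤ Real.exp ε * (∑ tr ∈ S, m tr * trueVal (q' tr)) + δ := by
      rw [hA, reindex_lemma p hp1 t G, hB]
      have step1 : ∑ x : Fin n → X, ∑ v : X,
            ((∏ i, p (x i)) * p v) * G (Function.update x t v) v
          ≤ ∑ x : Fin n → X, ∑ v : X,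
            ((∏ i, p (x i)) * p v) * (Real.exp ε * G x v + δ) := by
        apply Finset.sum_le_sum
        intro x _
        apply Finset.sum_le_sum
        intro v _
        exact mul_le_mul_of_nonneg_left (hpt x v) (mul_nonneg (hP0 x) (hp0 v))
      have step2 : ∑ x : Fin n → X, ∑ v : X,
            ((∏ i, p (x i)) * p v) * (Real.exp ε * G x v + δ)
          = Real.exp ε * (∑ x : Fin n → X, ∑ v : X, ((∏ i, p (x i)) * p v) * G x v)
            + δ := by
        have e2 : ∀ (x : Fin n → X) (v : X),
            ((∏ i, p (x i)) * p v) * (Real.exp ε * G x v + δ)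
            = Real.exp ε * (((∏ i, p (x i)) * p v) * G x v)
              + δ * ((∏ i, p (x i)) * p v) := by
          intro x v; ring
        rw [Finset.sum_congr rfl (fun x _ => Finset.sum_congr rfl (fun v _ => e2 x v))]
        simp only [Finset.sum_add_distrib, ← Finset.mul_sum]
        simp only [hp1, mul_one]
        rw [hPsum, mul_one]
      calc ∑ x : Fin n → X, ∑ v : X,
            ((∏ i, p (x i)) * p v) * G (Function.update x t v) v
          ≤ ∑ x : Fin n → X, ∑ v : X,
            ((∏ i, p (x i)) * p v) * (Real.exp ε * G x v + δ) := step1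
        _ = _ := step2
    have hBle : ∑ tr ∈ S, m tr * trueVal (q' tr) ≤ ∑ tr ∈ S, m tr :=
      Finset.sum_le_sum fun tr _ => mul_le_of_le_one_right (hm0 tr) (htv1 tr)
    have hB0 : (0:ℝ) ≤ ∑ tr ∈ S, m tr * trueVal (q' tr) :=
      Finset.sum_nonneg fun tr _ => mul_nonneg (hm0 tr) (htv0 tr)
    have h5 : (Real.exp ε - 1) * (∑ tr ∈ S, m tr * trueVal (q' tr))
        ≤ (Real.exp ε - 1) * (∑ tr ∈ S, m tr) :=
      mul_le_mul_of_nonneg_left hBle (by linarith)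
    linarith [hAle, h5]
  -- final assembly
  have hμS0 : 0 ≤ ∑ tr ∈ S, m tr := Finset.sum_nonneg fun tr _ => hm0 tr
  rcases eq_or_lt_of_le hμS0 with heq | hlt
  · rw [← heq]
    positivity
  · obtain ⟨tr₀, htr₀S, htr₀⟩ : ∃ tr ∈ S, 0 < m tr := by
      by_contra h
      push_neg at h
      have : ∑ tr ∈ S, m tr = 0 :=
        Finset.sum_eq_zero fun tr htr => le_antisymm (h tr htr) (hm0 tr)
      linarith
    have hstrict : (Real.exp ε - 1 + 2*c*δ) * (∑ tr ∈ S, m tr)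
        < ∑ tr ∈ S, m tr * |postVal (qstar tr) tr - trueVal (qstar tr)| := by
      rw [Finset.mul_sum]
      apply Finset.sum_lt_sum
      · intro tr htr
        have hD := (Finset.mem_filter.mp htr).2
        have := hm0 tr
        nlinarith
      · refine ⟨tr₀, htr₀S, ?_⟩
        have hD := (Finset.mem_filter.mp htr₀S).2
        nlinarith
    have hchain : ∑ tr ∈ S, m tr * |postVal (qstar tr) tr - trueVal (qstar tr)|
        ≤ (Real.exp ε - 1) * (∑ tr ∈ S, m tr) + δ := by
      rw [Finset.sum_congr rfl (fun tr _ => key1 tr), key2]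
      have hb : ∑ t : Fin n, ((∑ tr ∈ S, Nv (q' tr) tr t)
            - ∑ tr ∈ S, m tr * trueVal (q' tr))
          ≤ ∑ _t : Fin n, ((Real.exp ε - 1) * (∑ tr ∈ S, m tr) + δ) :=
        Finset.sum_le_sum fun t _ => key4 t
      have hb2 : (∑ t : Fin n, ((∑ tr ∈ S, Nv (q' tr) tr t)
            - ∑ tr ∈ S, m tr * trueVal (q' tr))) / (n:ℝ)
          ≤ (∑ _t : Fin n, ((Real.exp ε - 1) * (∑ tr ∈ S, m tr) + δ)) / (n:ℝ) := by
        gcongr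
      calc _ ≤ (∑ _t : Fin n, ((Real.exp ε - 1) * (∑ tr ∈ S, m tr) + δ)) / (n:ℝ) := hb2
        _ = (Real.exp ε - 1) * (∑ tr ∈ S, m tr) + δ := by
          rw [Finset.sum_const, card_univ, Fintype.card_fin, nsmul_eq_mul,
            mul_div_cancel_left₀ _ hn']
    have h2cδ : 2*c*δ * (∑ tr ∈ S, m tr) < δ := by nlinarith [hstrict, hchain]
    have hδpos : 0 < δ := by
      rcases lt_or_eq_of_le hδ with h | h
      · exact h
      · exfalso
        rw [← h] at h2cδ
        linarith
    rw [le_div_iff₀ hc]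
    nlinarith [h2cδ, hδpos, hμS0, hc]
end
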